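/- (Example with deterministic X₂.) Let P be the probability distribution on {0,1,2} × {0,1} × {0,1} (values of (S, X₁, X₂)) with P(0,0,0)=1/6, P(0,1,0)=1/6, P(1,0,1)=1/6, P(1,1,1)=1/6, P(2,1,1)=1/3, and all other atoms 0, and let f : {0,1,2} → {0,1} with f(0)=f(1)=0 and f(2)=1. Let u : {0,1} × {0,1,2} → ℝ be the utility with u(1,1)=1, u(1,2)=−1 and u(a,s)=0 otherwise (first argument the action, second the state). Let p be the marginal of S and let κ₁, κ₂ be the channels with entries P(X₁=x|S=s), P(X₂=x|S=s). Then: (a) X₂ is a deterministic function of S (P-almost surely X₂ = 0 if S=0 and X₂ = 1 otherwise); (b) S and X₁ are conditionally independent given f(S); (c) the channels (X₁←f(S)) and (X₂←f(S)) are equal; (d) the optimal expected utilities are U(p,u,κ₂) = 0 and U(p,u,κ₁) = 1/6 > 0; consequently κ₁ is not a garbling of κ₂. -/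

import Mathlib

/-!
The channels are explicit: `κ₁` has columns `(1/2, 1/2)`, `(1/2, 1/2)`, `(0, 1)` and `κ₂` is
deterministic with columns `e₀`, `e₁`, `e₁`. Observing `X₂ = 1` cannot separate the states `1`
and `2`, whose utilities cancel, so `U(p,u,κ₂) = 0`, whereas playing action `1` on `X₁ = 0`
earns `1/6`. Garbling can only lower the optimal utility: if `κ₁ = λ·κ₂`, any decision rule for
`κ₁` is dominated by the rule for `κ₂` that plays, on each `x₂`, the action that is best
against `x₂` alone. Hence `κ₁` is not a garbling of `κ₂`, although the two channels become
equal once `S` is coarse-grained to `f(S)`.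
-/

open Finset

def IsDist {S : Type} [Fintype S] (p : S → ℝ) : Prop :=
  (∀ s, 0 ≤ p s) ∧ ∑ s, p s = 1

def IsChannel {S X : Type} [Fintype S] [Fintype X] (κ : X → S → ℝ) : Prop :=
  (∀ x s, 0 ≤ κ x s) ∧ ∀ s, ∑ x, κ x s = 1

/-- The Blackwell order `κ₁ ⪯ κ₂`. -/
def IsGarbling {S X₁ X₂ : Type} [Fintype S] [Fintype X₁] [Fintype X₂]
    (κ₁ : X₁ → S → ℝ) (κ₂ : X₂ → S → ℝ) : Prop :=
  ∃ lam : X₁ → X₂ → ℝ, IsChannel lam ∧ ∀ x₁ s, κ₁ x₁ s = ∑ x₂, lam x₁ x₂ * κ₂ x₂ s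

noncomputable def optUtility {S X A : Type} [Fintype S] [Fintype X] [Fintype A]
    (p : S → ℝ) (u : A × S → ℝ) (κ : X → S → ℝ) : ℝ :=
  ⨆ d : X → A, ∑ s, ∑ x, p s * κ x s * u (d x, s)

noncomputable def mutualInfo {S X : Type} [Fintype S] [Fintype X]
    (p : S → ℝ) (κ : X → S → ℝ) : ℝ :=
  ∑ s, ∑ x, if κ x s = 0 then 0 else
    p s * κ x s * Real.log (κ x s / ∑ s', p s' * κ x s')

def chanComp {S T X : Type} [Fintype S] [Fintype T] [Fintype X]
    (κ : X → T → ℝ) (lam : T → S → ℝ) : X → S → ℝ :=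
  fun x s => ∑ t, κ x t * lam t s

noncomputable def margS3 {S X₁ X₂ : Type} [Fintype S] [Fintype X₁] [Fintype X₂]
    (P : S × X₁ × X₂ → ℝ) (s : S) : ℝ := ∑ x₁, ∑ x₂, P (s, x₁, x₂)

/-- The channel `X₁ ← S` of conditional probabilities `P(X₁ = x₁ | S = s)`. -/
noncomputable def chan1of3 {S X₁ X₂ : Type} [Fintype S] [Fintype X₁] [Fintype X₂]
    (P : S × X₁ × X₂ → ℝ) (x₁ : X₁) (s : S) : ℝ :=
  (∑ x₂, P (s, x₁, x₂)) / margS3 P s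

/-- The channel `X₂ ← S` of conditional probabilities `P(X₂ = x₂ | S = s)`. -/
noncomputable def chan2of3 {S X₁ X₂ : Type} [Fintype S] [Fintype X₁] [Fintype X₂]
    (P : S × X₁ × X₂ → ℝ) (x₂ : X₂) (s : S) : ℝ :=
  (∑ x₁, P (s, x₁, x₂)) / margS3 P s

noncomputable def push3 {S S' X₁ X₂ : Type} [Fintype S] [Fintype X₁] [Fintype X₂]
    [DecidableEq S'] (f : S → S') (P : S × X₁ × X₂ → ℝ) : S' × X₁ × X₂ → ℝ :=
  fun q => ∑ s ∈ Finset.univ.filter (fun s => f s = q.1), P (s, q.2.1, q.2.2)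

noncomputable def Pdet : Fin 3 × Fin 2 × Fin 2 → ℝ := fun q =>
  if q = (0, 0, 0) then 1/6
  else if q = (0, 1, 0) then 1/6
  else if q = (1, 0, 1) then 1/6
  else if q = (1, 1, 1) then 1/6
  else if q = (2, 1, 1) then 1/3
  else 0

def fDet : Fin 3 → Fin 2 := fun s => if s = 2 then 1 else 0

noncomputable def expectedUtility {S X A : Type} [Fintype S] [Fintype X]
    (p : S → ℝ) (u : A × S → ℝ) (κ : X → S → ℝ) (d : X → A) : ℝ :=
  ∑ s, ∑ x, p s * κ x s * u (d x, s)

theorem optUtility_eq_iSup {S X A : Type} [Fintype S] [Fintype X] [Fintype A]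
    (p : S → ℝ) (u : A × S → ℝ) (κ : X → S → ℝ) :
    optUtility p u κ = ⨆ d, expectedUtility p u κ d :=
  rfl

theorem optUtility_eq_of_isGreatest {S X A : Type} [Fintype S] [Fintype X] [Fintype A]
    [Nonempty A] {p : S → ℝ} {u : A × S → ℝ} {κ : X → S → ℝ} {c : ℝ}
    (h : IsGreatest (Set.range (expectedUtility p u κ)) c) : optUtility p u κ = c :=
  h.isLUB.ciSup_eq

theorem optUtility_mono_of_isGarbling {S X₁ X₂ A : Type} [Fintype S] [Fintype X₁]
    [Fintype X₂] [Fintype A] [Nonempty A] (p : S → ℝ) (u : A × S → ℝ)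
    {κ₁ : X₁ → S → ℝ} {κ₂ : X₂ → S → ℝ} (h : IsGarbling κ₁ κ₂) :
    optUtility p u κ₁ ≤ optUtility p u κ₂ := by
  obtain ⟨lam, ⟨lam_nonneg, lam_sum⟩, hκ⟩ := h
  let g : A → X₂ → ℝ := fun a x₂ => ∑ s, p s * κ₂ x₂ s * u (a, s)
  choose best hbest using fun x₂ => Finite.exists_max (g · x₂)
  refine ciSup_le fun d => le_trans ?_ (le_ciSup (Set.finite_range _).bddAbove best)
  calc expectedUtility p u κ₁ d = ∑ x₁, ∑ x₂, lam x₁ x₂ * g (d x₁) x₂ := by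
        simp only [expectedUtility, g, hκ, mul_sum, sum_mul]
        rw [sum_comm]
        refine sum_congr rfl fun _ _ => ?_
        rw [sum_comm]
        exact sum_congr rfl fun _ _ => sum_congr rfl fun _ _ => by ring
    _ ≤ ∑ x₁, ∑ x₂, lam x₁ x₂ * g (best x₂) x₂ := by
        gcongr with x₁ _ x₂ _
        · exact lam_nonneg x₁ x₂
        · exact hbest x₂ (d x₁)
    _ = ∑ x₂, g (best x₂) x₂ := by
        rw [sum_comm]
        simp only [← sum_mul, lam_sum, one_mul]
    _ = expectedUtility p u κ₂ best := sum_comm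

def uDet : Fin 2 × Fin 3 → ℝ := fun as =>
  if as = (1, 1) then 1 else if as = (1, 2) then -1 else 0

theorem margS3_Pdet : margS3 Pdet = fun _ => 1/3 := by
  funext s
  fin_cases s <;> simp [margS3, Pdet, Fin.sum_univ_succ, Prod.ext_iff] <;> norm_num

theorem chan1of3_Pdet : chan1of3 Pdet = ![![1/2, 1/2, 0], ![1/2, 1/2, 1]] := by
  funext x s
  fin_cases x <;> fin_cases s <;>
    simp [chan1of3, margS3_Pdet, Pdet, Prod.ext_iff] <;> norm_num

theorem chan2of3_Pdet : chan2of3 Pdet = ![![1, 0, 0], ![0, 1, 1]] := by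
  funext x s
  fin_cases x <;> fin_cases s <;>
    simp [chan2of3, margS3_Pdet, Pdet, Fin.sum_univ_succ, Prod.ext_iff] <;> norm_num

theorem margS3_push3_fDet_Pdet : margS3 (push3 fDet Pdet) = ![2/3, 1/3] := by
  funext t
  fin_cases t <;> simp [margS3, push3, fDet, Pdet, Fin.sum_univ_succ, sum_filter, Prod.ext_iff]
  norm_num

theorem chan1of3_push3_fDet_Pdet : chan1of3 (push3 fDet Pdet) = ![![1/2, 0], ![1/2, 1]] := by
  funext x t
  fin_cases x <;> fin_cases t <;>
    simp [chan1of3, margS3_push3_fDet_Pdet, push3, fDet, Pdet, Fin.sum_univ_succ, sum_filter,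
      Prod.ext_iff] <;> norm_num

theorem chan2of3_push3_fDet_Pdet : chan2of3 (push3 fDet Pdet) = ![![1/2, 0], ![1/2, 1]] := by
  funext x t
  fin_cases x <;> fin_cases t <;>
    simp [chan2of3, margS3_push3_fDet_Pdet, push3, fDet, Pdet, Fin.sum_univ_succ, sum_filter,
      Prod.ext_iff] <;> norm_num

theorem expectedUtility_chan1of3_Pdet (d : Fin 2 → Fin 2) :
    expectedUtility (margS3 Pdet) uDet (chan1of3 Pdet) d =
      (if d 0 = 1 then 1/6 else 0) - (if d 1 = 1 then 1/6 else 0) := by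
  split_ifs <;>
    simp [expectedUtility, uDet, margS3_Pdet, chan1of3_Pdet, Fin.sum_univ_succ, *] <;> norm_num

theorem expectedUtility_chan2of3_Pdet (d : Fin 2 → Fin 2) :
    expectedUtility (margS3 Pdet) uDet (chan2of3 Pdet) d = 0 := by
  by_cases h : d 1 = 1 <;>
    simp [expectedUtility, uDet, margS3_Pdet, chan2of3_Pdet, Fin.sum_univ_succ, h]

theorem optUtility_chan1of3_Pdet : optUtility (margS3 Pdet) uDet (chan1of3 Pdet) = 1/6 := by
  refine optUtility_eq_of_isGreatest ⟨⟨![1, 0], ?_⟩, ?_⟩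
  · simp [expectedUtility_chan1of3_Pdet]
  · rintro _ ⟨d, rfl⟩
    rw [expectedUtility_chan1of3_Pdet]
    split_ifs <;> norm_num

theorem optUtility_chan2of3_Pdet : optUtility (margS3 Pdet) uDet (chan2of3 Pdet) = 0 := by
  simp only [optUtility_eq_iSup, expectedUtility_chan2of3_Pdet, ciSup_const]

theorem not_isGarbling_chan1of3_Pdet_chan2of3_Pdet :
    ¬ IsGarbling (chan1of3 Pdet) (chan2of3 Pdet) := fun h => by
  have := optUtility_mono_of_isGarbling (margS3 Pdet) uDet h
  rw [optUtility_chan1of3_Pdet, optUtility_chan2of3_Pdet] at this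
  norm_num at this

/-- Example with deterministic `X₂`: (a) `X₂` is almost surely a function
of `S`; (b) `S` and `X₁` are conditionally independent given `f(S)`; (c) the channels
`X₁ ← f(S)` and `X₂ ← f(S)` are equal; (d) with the utility `u(1,1) = 1`, `u(1,2) = -1`,
`u = 0` otherwise, the optimal utilities are `U(p,u,κ₂) = 0 < 1/6 = U(p,u,κ₁)`;
consequently `κ₁` is not a garbling of `κ₂`. -/
theorem det_example :
    -- (a) X₂ is a deterministic function of S (almost surely)
    (∀ (s : Fin 3) (x₁ x₂ : Fin 2), Pdet (s, x₁, x₂) ≠ 0 →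
      x₂ = (if s = 0 then 0 else 1)) ∧
    -- (b) S and X₁ are conditionally independent given f(S)
    (∀ s, 0 < margS3 Pdet s →
      ∀ x₁, chan1of3 Pdet x₁ s = chan1of3 (push3 fDet Pdet) x₁ (fDet s)) ∧
    -- (c) the channels X₁ ← f(S) and X₂ ← f(S) are equal
    (∀ x t, chan1of3 (push3 fDet Pdet) x t = chan2of3 (push3 fDet Pdet) x t) ∧
    -- (d) utility computations and the failure of the Blackwell relation
    optUtility (margS3 Pdet)
        (fun as : Fin 2 × Fin 3 =>
          if as = (1, 1) then (1 : ℝ) else if as = (1, 2) then -1 else 0)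
        (chan2of3 Pdet) = 0 ∧
    optUtility (margS3 Pdet)
        (fun as : Fin 2 × Fin 3 =>
          if as = (1, 1) then (1 : ℝ) else if as = (1, 2) then -1 else 0)
        (chan1of3 Pdet) = 1/6 ∧
    (0 : ℝ) < 1/6 ∧
    ¬ IsGarbling (chan1of3 Pdet) (chan2of3 Pdet) := by
  refine ⟨?_, ?_, fun x t => ?_, optUtility_chan2of3_Pdet, optUtility_chan1of3_Pdet,
    by norm_num, not_isGarbling_chan1of3_Pdet_chan2of3_Pdet⟩
  · intro s x₁ x₂ hP
    fin_cases s <;> fin_cases x₁ <;> fin_cases x₂ <;> simp_all [Pdet, Prod.ext_iff]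
  · intro s _ x₁
    rw [chan1of3_Pdet, chan1of3_push3_fDet_Pdet]
    fin_cases s <;> fin_cases x₁ <;> simp [fDet]
  · rw [chan1of3_push3_fDet_Pdet, chan2of3_push3_fDet_Pdet]
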